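/- arXiv:1411.1714 — 2 statements merged into one kernel-verified Lean document; each statement's English description precedes it below -/
import Mathlib

section
/- Let e ≥ 2 and let λ ⊆ ν be partitions. If the skew shape ν/λ admits two tilings by e-ribbons (each tiling given by a chain of partitions from λ to ν in which consecutive terms differ by an e-ribbon), then the total spins of the two tilings — the sums of the spins of their ribbons — are congruent modulo 2. (Well-definedness of the sign (−1)^{spin} attached to ribbon tilings, used in the definition of the operators V_k and in the sign ε of the Farahat character in Section 6.) -/
/-- Two cells of a Young diagram are edge-adjacent. -/
def CellAdj (a b : ℕ × ℕ) : Prop :=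
  (a.1 = b.1 ∧ (a.2 + 1 = b.2 ∨ b.2 + 1 = a.2)) ∨
  (a.2 = b.2 ∧ (a.1 + 1 = b.1 ∨ b.1 + 1 = a.1))

/-- A finite set of cells is edgewise connected. -/
def ConnectedCells (s : Finset (ℕ × ℕ)) : Prop :=
  ∀ a ∈ s, ∀ b ∈ s,
    Relation.ReflTransGen (fun x y => x ∈ s ∧ y ∈ s ∧ CellAdj x y) a b

/-- A finite set of cells is an `e`-ribbon shape: it has exactly `e` cells, it is
edgewise connected, and it contains no 2 × 2 block of cells. -/
def IsRibbonShape (e : ℕ) (s : Finset (ℕ × ℕ)) : Prop :=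
  s.card = e ∧ ConnectedCells s ∧
    ¬ ∃ i j : ℕ, (i, j) ∈ s ∧ (i + 1, j) ∈ s ∧ (i, j + 1) ∈ s ∧ (i + 1, j + 1) ∈ s

/-- `RibbonStep e μ ν` : `μ ⊆ ν` and the skew shape `ν / μ` is an `e`-ribbon,
i.e. `μ` is obtained from `ν` by removing a single `e`-ribbon. -/
def RibbonStep (e : ℕ) (μ ν : YoungDiagram) : Prop :=
  μ ≤ ν ∧ IsRibbonShape e (ν.cells \ μ.cells)

/-- An `e`-core is a partition admitting no removable `e`-ribbon. -/
def IsECore (e : ℕ) (c : YoungDiagram) : Prop :=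
  ∀ μ : YoungDiagram, ¬ RibbonStep e μ c

/-- `IsECoreOf e λ c` : `c` is obtained from `λ` by successively removing `e`-ribbons,
and `c` admits no removable `e`-ribbon; i.e. `c` is the `e`-core of `λ`. -/
def IsECoreOf (e : ℕ) (la c : YoungDiagram) : Prop :=
  Relation.ReflTransGen (fun x y => RibbonStep e y x) la c ∧ IsECore e c

/-- `IsRibbonTiling e la nu μ k` : the chain `la = μ 0 ⊆ μ 1 ⊆ ⋯ ⊆ μ k = nu` exhibits a
tiling of the skew shape `nu / la` by `k` `e`-ribbons, the `t`-th ribbon being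
`μ (t+1) / μ t`. -/
def IsRibbonTiling (e : ℕ) (la nu : YoungDiagram) (μ : ℕ → YoungDiagram) (k : ℕ) : Prop :=
  μ 0 = la ∧ μ k = nu ∧ ∀ t, t < k → RibbonStep e (μ t) (μ (t + 1))

/-- The `t`-th ribbon of a tiling given by a chain `μ`. -/
def ribbonOf (μ : ℕ → YoungDiagram) (t : ℕ) : Finset (ℕ × ℕ) :=
  (μ (t + 1)).cells \ (μ t).cells

/-- `c` is the head (top-rightmost cell) of the ribbon `s` : `c` lies in the rightmost
column of `s`, topmost within that column. -/
def IsHead (s : Finset (ℕ × ℕ)) (c : ℕ × ℕ) : Prop :=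
  c ∈ s ∧ (∀ d ∈ s, d.2 ≤ c.2) ∧ ∀ d ∈ s, d.2 = c.2 → c.1 ≤ d.1

/-- The ribbon `s` is horizontal relative to `nu` : the cell immediately above its
top-rightmost cell does not belong to the Young diagram of `nu`. -/
def HorizontalRibbon (nu : YoungDiagram) (s : Finset (ℕ × ℕ)) : Prop :=
  ∀ c : ℕ × ℕ, IsHead s c → ∀ i : ℕ, c.1 = i + 1 → (i, c.2) ∉ nu

/-- A horizontal `e`-ribbon strip tiling of `nu / la` of weight `k`. -/
def IsHorizontalStrip (e : ℕ) (la nu : YoungDiagram) (μ : ℕ → YoungDiagram) (k : ℕ) : Prop :=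
  IsRibbonTiling e la nu μ k ∧ ∀ t, t < k → HorizontalRibbon nu (ribbonOf μ t)

/-- The spin of a ribbon: its number of nonempty rows minus 1. -/
def ribbonSpin (s : Finset (ℕ × ℕ)) : ℕ :=
  (s.image Prod.fst).card - 1

/-!
Encode a partition `λ` by the residues modulo `e` of its beta-numbers `λᵢ - i` (the beads of
its `e`-abacus) and count the pairs `i < j` whose residues increase. Removing an `e`-ribbon of
spin `d` moves a single bead down by `e`; it jumps over exactly `d` beads, all of which lie
less than `e` below it and so have other residues. The residue sequence thus undergoes `d`
transpositions of adjacent distinct values, each changing the count by one. Hence the total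
spin of any tiling of `ν / λ` is congruent modulo 2 to the difference of the counts of `ν`
and `λ`.
-/

open Finset

section Ascents
variable {α : Type*} [LinearOrder α]

def ascents (N : ℕ) (f : ℕ → α) : ℕ :=
  #{p ∈ range N ×ˢ range N | p.1 < p.2 ∧ f p.1 < f p.2}

theorem ascents_comp_swap_add (f : ℕ → α) {N i : ℕ} (hi : i + 1 < N) :
    ascents N (f ∘ Equiv.swap i (i + 1)) + (if f i < f (i + 1) then 1 else 0) =
      ascents N f + (if f (i + 1) < f i then 1 else 0) := by
  set σ := Equiv.swap i (i + 1)
  have hσ : ∀ p, σ p < N ↔ p < N := by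
    intro p; simp only [σ, Equiv.swap_apply_def]; split_ifs <;> omega
  have reindex : ascents N (f ∘ σ) =
      ∑ p ∈ range N ×ˢ range N, if σ p.1 < σ p.2 ∧ f p.1 < f p.2 then 1 else 0 := by
    rw [ascents, card_filter]
    refine sum_equiv (σ.prodCongr σ) (fun p => by simp [hσ]) fun p _ => ?_
    simp [σ, Equiv.swap_apply_self]
  have pointwise : ∀ p : ℕ × ℕ,
      ((if σ p.1 < σ p.2 ∧ f p.1 < f p.2 then 1 else 0) +
        if p = (i, i + 1) ∧ f i < f (i + 1) then 1 else 0) =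
      (if p.1 < p.2 ∧ f p.1 < f p.2 then 1 else 0) +
        if p = (i + 1, i) ∧ f (i + 1) < f i then 1 else 0 := by
    -- `σ` preserves the order of every pair of indices other than `i, i + 1`
    rintro ⟨p, q⟩
    simp only [σ, Equiv.swap_apply_def, Prod.mk.injEq]
    split_ifs <;> grind
  have single : ∀ {a b}, a < N → b < N → ∀ P : Prop, [Decidable P] →
      (∑ p ∈ range N ×ˢ range N, if p = (a, b) ∧ P then 1 else 0) = if P then 1 else 0 := by
    intro a b ha hb P _
    simp only [ite_and]
    rw [sum_ite_eq_of_mem' _ _ _ (by simp [ha, hb] : (a, b) ∈ range N ×ˢ range N)]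
  have key := sum_congr rfl fun p (_ : p ∈ range N ×ˢ range N) => pointwise p
  rw [sum_add_distrib, sum_add_distrib, single (by omega) hi, single hi (by omega)] at key
  rw [reindex, ascents, card_filter, key]

theorem ascents_comp_swap_mod_two (f : ℕ → α) {N i : ℕ} (hi : i + 1 < N)
    (hne : f i ≠ f (i + 1)) :
    ascents N (f ∘ Equiv.swap i (i + 1)) % 2 = (ascents N f + 1) % 2 := by
  have := ascents_comp_swap_add f hi
  rcases hne.lt_or_gt with h | h
  · simp only [h, h.not_gt, if_true, if_false] at this; omega
  · simp only [h, h.not_gt, if_true, if_false] at this; omega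

/-- `g` is `f` with its entry `f r` moved to position `r + d`, past `d` entries different
from it. -/
theorem ascents_mod_two_of_move (f g : ℕ → α) {N r d : ℕ} (hN : r + d < N)
    (hlow : ∀ i < r, g i = f i) (hmid : ∀ i, r ≤ i → i < r + d → g i = f (i + 1))
    (htop : g (r + d) = f r) (hhigh : ∀ i, r + d < i → g i = f i)
    (hne : ∀ m, r < m → m ≤ r + d → f m ≠ f r) :
    ascents N g % 2 = (ascents N f + d) % 2 := by
  induction d generalizing g with
  | zero =>
    have : g = f := funext fun i => by
      rcases lt_trichotomy i r with h | rfl | h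
      · exact hlow i h
      · exact htop
      · exact hhigh i h
    simp [this]
  | succ d ih =>
    rw [← add_assoc] at hN htop
    set σ := Equiv.swap (r + d) (r + d + 1)
    have hg : g = (g ∘ σ) ∘ σ := by ext; simp [σ]
    have hσ : ∀ i, i ≠ r + d → i ≠ r + d + 1 → σ i = i := fun i h₁ h₂ =>
      Equiv.swap_apply_of_ne_of_ne h₁ h₂
    have ih' := ih (g ∘ σ) (by omega)
      (fun i hi => by simp [hσ i (by omega) (by omega), hlow i hi])
      (fun i hi₁ hi₂ => by simp [hσ i (by omega) (by omega), hmid i hi₁ (by omega)])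
      (by simp [σ, htop])
      (fun i hi => by
        rcases (Nat.succ_le_of_lt hi).eq_or_lt with rfl | hi'
        · simp [σ, hmid (r + d) (by omega) (by omega)]
        · simp [hσ i (by omega) (by omega), hhigh i (by omega)])
      (fun m hm₁ hm₂ => hne m hm₁ (by omega))
    have hswap : (g ∘ σ) (r + d) ≠ (g ∘ σ) (r + d + 1) := by
      simpa [σ, htop, hmid (r + d) (by omega) (by omega)] using (hne _ (by omega) (by omega)).symm
    rw [hg, ascents_comp_swap_mod_two _ (by omega) hswap]
    omega

end Ascents

theorem Int.emod_ne_of_lt_of_lt_add {a b n : ℤ} (hab : a < b) (hba : b < a + n) :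
    a % n ≠ b % n := fun h =>
  absurd (Int.eq_zero_of_dvd_of_nonneg_of_lt (by omega) (by omega) (Int.ModEq.dvd h)) (by omega)

theorem Finset.sum_range_sub_of_succ_eq (a b : ℕ → ℤ) {d : ℕ}
    (h : ∀ i < d, a (i + 1) = b i + 1) :
    ∑ i ∈ range (d + 1), (a i - b i) = a 0 - b d + d := by
  induction d with
  | zero => simp
  | succ d ih =>
    rw [sum_range_succ, ih fun i hi => h i (by omega), h d (by omega)]
    push_cast
    ring

namespace YoungDiagram

theorem rowLen_mono {μ ν : YoungDiagram} (h : μ ≤ ν) (i : ℕ) : μ.rowLen i ≤ ν.rowLen i := by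
  by_contra! hc
  have := h (mem_iff_lt_rowLen.mpr hc)
  rw [mem_iff_lt_rowLen] at this
  omega

theorem fst_lt_colLen_zero {μ : YoungDiagram} {c : ℕ × ℕ} (h : c ∈ μ) : c.1 < μ.colLen 0 :=
  mem_iff_lt_colLen.mp (μ.up_left_mem le_rfl (Nat.zero_le _) h)

theorem mk_mem_sdiff_cells {μ ν : YoungDiagram} {i j : ℕ} :
    (i, j) ∈ ν.cells \ μ.cells ↔ μ.rowLen i ≤ j ∧ j < ν.rowLen i := by
  rw [mem_sdiff, mem_cells, mem_cells, mem_iff_lt_rowLen, mem_iff_lt_rowLen]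
  omega

theorem mem_image_fst_sdiff_cells {μ ν : YoungDiagram} {i : ℕ} :
    i ∈ (ν.cells \ μ.cells).image Prod.fst ↔ μ.rowLen i < ν.rowLen i := by
  refine ⟨fun hi => ?_, fun h => ?_⟩
  · obtain ⟨⟨i, j⟩, hij, rfl⟩ := mem_image.mp hi
    have := mk_mem_sdiff_cells.mp hij
    exact this.1.trans_lt this.2
  · exact mem_image.mpr ⟨(i, μ.rowLen i), mk_mem_sdiff_cells.mpr ⟨le_rfl, h⟩, rfl⟩

theorem card_sdiff_cells {μ ν : YoungDiagram} (h : μ ≤ ν) {S : Finset ℕ}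
    (hS : ∀ c ∈ ν.cells \ μ.cells, c.1 ∈ S) :
    #(ν.cells \ μ.cells) = ∑ i ∈ S, (ν.rowLen i - μ.rowLen i) := by
  rw [card_eq_sum_card_fiberwise hS]
  refine sum_congr rfl fun i _ => ?_
  have hrow : μ.row i ⊆ ν.row i := filter_subset_filter _ (cells_subset_iff.mpr h)
  rw [rowLen_eq_card, rowLen_eq_card, ← card_sdiff_of_subset hrow, row, row]
  congr 1
  grind

end YoungDiagram

theorem exists_vertical_adj_of_reflTransGen {s : Finset (ℕ × ℕ)} {a b : ℕ × ℕ}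
    (h : Relation.ReflTransGen (fun x y => x ∈ s ∧ y ∈ s ∧ CellAdj x y) a b) {i : ℕ}
    (ha : a.1 ≤ i) (hb : i < b.1) : ∃ j, (i, j) ∈ s ∧ (i + 1, j) ∈ s := by
  induction h with
  | refl => omega
  | @tail c d _ hcd ih =>
    by_cases hic : i < c.1
    · exact ih hic
    obtain ⟨hc, hd, hadj⟩ := hcd
    obtain ⟨c₁, c₂⟩ := c
    obtain ⟨d₁, d₂⟩ := d
    simp only [CellAdj] at hadj hic hb
    obtain ⟨rfl, rfl, rfl⟩ : c₁ = i ∧ d₁ = i + 1 ∧ d₂ = c₂ := by omega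
    exact ⟨_, hc, hd⟩

namespace YoungDiagram

theorem rowLen_succ_eq_of_not_square {μ ν : YoungDiagram}
    (hsq : ¬ ∃ i j : ℕ, (i, j) ∈ ν.cells \ μ.cells ∧ (i + 1, j) ∈ ν.cells \ μ.cells ∧
      (i, j + 1) ∈ ν.cells \ μ.cells ∧ (i + 1, j + 1) ∈ ν.cells \ μ.cells)
    {i : ℕ} (h : μ.rowLen i < ν.rowLen (i + 1)) : ν.rowLen (i + 1) = μ.rowLen i + 1 := by
  by_contra hne
  refine hsq ⟨i, μ.rowLen i, ?_⟩
  simp only [mk_mem_sdiff_cells]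
  have := ν.rowLen_anti i (i + 1) (by omega)
  have := μ.rowLen_anti i (i + 1) (by omega)
  omega

end YoungDiagram

open YoungDiagram

section RibbonShape

variable {e : ℕ} {μ ν : YoungDiagram} {r r' : ℕ}

theorem IsRibbonShape.rowLen_succ_eq (hs : IsRibbonShape e (ν.cells \ μ.cells))
    (hr : μ.rowLen r < ν.rowLen r) (hr' : μ.rowLen r' < ν.rowLen r') {i : ℕ}
    (h₁ : r ≤ i) (h₂ : i < r') : ν.rowLen (i + 1) = μ.rowLen i + 1 := by
  obtain ⟨j, hj, hj'⟩ := exists_vertical_adj_of_reflTransGen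
    (hs.2.1 _ (mk_mem_sdiff_cells.mpr ⟨le_rfl, hr⟩) _ (mk_mem_sdiff_cells.mpr ⟨le_rfl, hr'⟩))
    h₁ h₂
  rw [mk_mem_sdiff_cells] at hj hj'
  exact rowLen_succ_eq_of_not_square hs.2.2 (by omega)

theorem IsRibbonShape.rowLen_lt (hs : IsRibbonShape e (ν.cells \ μ.cells))
    (hr : μ.rowLen r < ν.rowLen r) (hr' : μ.rowLen r' < ν.rowLen r') {i : ℕ}
    (h₁ : r ≤ i) (h₂ : i ≤ r') : μ.rowLen i < ν.rowLen i := by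
  obtain rfl | h₁ := h₁.eq_or_lt
  · exact hr
  have := hs.rowLen_succ_eq hr hr' (i := i - 1) (by omega) (by omega)
  rw [Nat.sub_add_cancel (by omega)] at this
  have := μ.rowLen_anti (i - 1) i (by omega)
  omega

/-- An `e`-ribbon occupies an interval of rows, each overlapping the next in exactly one
column. -/
theorem RibbonStep.exists_rows (he : 0 < e) (h : RibbonStep e μ ν) :
    ∃ r d : ℕ, (∀ i, i < r ∨ r + d < i → μ.rowLen i = ν.rowLen i) ∧
      (∀ i, r ≤ i → i < r + d → ν.rowLen (i + 1) = μ.rowLen i + 1) ∧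
      μ.rowLen (r + d) < ν.rowLen (r + d) ∧
      (ν.rowLen r : ℤ) = μ.rowLen (r + d) + e - d ∧
      ribbonSpin (ν.cells \ μ.cells) = d := by
  obtain ⟨hle, hs⟩ := h
  set R := (ν.cells \ μ.cells).image Prod.fst
  have hR : R.Nonempty := (card_pos.mp (hs.1 ▸ he)).image _
  set r := R.min' hR
  set r' := R.max' hR
  have hr : μ.rowLen r < ν.rowLen r := mem_image_fst_sdiff_cells.mp (R.min'_mem hR)
  have hr' : μ.rowLen r' < ν.rowLen r' := mem_image_fst_sdiff_cells.mp (R.max'_mem hR)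
  have hrr' : r ≤ r' := R.min'_le _ (R.max'_mem hR)
  have rows : R = Icc r r' := by
    ext i
    rw [mem_Icc]
    exact ⟨fun hi => ⟨R.min'_le i hi, R.le_max' i hi⟩,
      fun hi => mem_image_fst_sdiff_cells.mpr (hs.rowLen_lt hr hr' hi.1 hi.2)⟩
  have hcard : (e : ℤ) = ∑ i ∈ range (r' - r + 1),
      ((ν.rowLen (r + i) : ℤ) - μ.rowLen (r + i)) := by
    rw [← hs.1, card_sdiff_cells hle (S := Icc r r') fun c hc => rows ▸ mem_image_of_mem _ hc,
      ← Ico_add_one_right_eq_Icc, sum_Ico_eq_sum_range, show r' + 1 - r = r' - r + 1 by omega]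
    push_cast [rowLen_mono hle]
    rfl
  have hsucc : ∀ i < r' - r, (ν.rowLen (r + (i + 1)) : ℤ) = μ.rowLen (r + i) + 1 := fun i hi => by
    rw [← add_assoc, hs.rowLen_succ_eq hr hr' (by omega) (by omega : r + i < r')]
    push_cast
    rfl
  rw [sum_range_sub_of_succ_eq (fun i => ν.rowLen (r + i)) (fun i => μ.rowLen (r + i)) hsucc,
    add_zero, Nat.add_sub_cancel' hrr'] at hcard
  refine ⟨r, r' - r, fun i hi => ?_, fun i h₁ h₂ => hs.rowLen_succ_eq hr hr' h₁ (by omega),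
    by rwa [Nat.add_sub_cancel' hrr'], by rw [Nat.add_sub_cancel' hrr']; omega, ?_⟩
  · have : i ∉ R := fun hi' => by rw [rows, mem_Icc] at hi'; omega
    rw [mem_image_fst_sdiff_cells] at this
    have := rowLen_mono hle i
    omega
  · change #R - 1 = _
    rw [rows, Nat.card_Icc]
    omega

end RibbonShape

/-- The residues modulo `e` of the beta-numbers `λᵢ - i` of a partition `λ`. -/
def betaResidue (e : ℕ) (π : YoungDiagram) (i : ℕ) : ℤ :=
  ((π.rowLen i : ℤ) - i) % e

/-- Removing an `e`-ribbon of rows `r, …, r + d` lowers the bead at position `r` by `e` to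
position `r + d`, past `d` beads whose residues differ from its own. -/
theorem RibbonStep.ascents_betaResidue_mod_two {e : ℕ} (he : 0 < e) {μ ν : YoungDiagram}
    (h : RibbonStep e μ ν) {N : ℕ} (hN : ∀ c ∈ ν, c.1 < N) :
    ascents N (betaResidue e μ) % 2 =
      (ascents N (betaResidue e ν) + ribbonSpin (ν.cells \ μ.cells)) % 2 := by
  obtain ⟨r, d, hout, hsucc, hlast, hlen, hspin⟩ := h.exists_rows he
  rw [hspin]
  refine ascents_mod_two_of_move _ _ (hN _ (mem_iff_lt_rowLen.mpr hlast))
    (fun i hi => ?_) (fun i h₁ h₂ => ?_) ?_ (fun i hi => ?_) (fun m h₁ h₂ => ?_)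
  · simp [betaResidue, hout i (Or.inl hi)]
  · simp only [betaResidue, hsucc i h₁ h₂]
    push_cast
    ring_nf
  · rw [betaResidue, betaResidue, ← Int.add_emod_right]
    congr 1
    push_cast
    omega
  · simp [betaResidue, hout i (Or.inr hi)]
  · have := ν.rowLen_anti r m h₁.le
    have := ν.rowLen_anti m (r + d) h₂
    exact Int.emod_ne_of_lt_of_lt_add (by omega) (by omega)

theorem IsRibbonTiling.ascents_betaResidue_mod_two {e : ℕ} (he : 0 < e)
    {la nu : YoungDiagram} {μ : ℕ → YoungDiagram} {k : ℕ} (h : IsRibbonTiling e la nu μ k)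
    {N : ℕ} (hN : ∀ c ∈ nu, c.1 < N) :
    ascents N (betaResidue e la) % 2 =
      (ascents N (betaResidue e nu) + ∑ t ∈ range k, ribbonSpin (ribbonOf μ t)) % 2 := by
  induction k generalizing nu with
  | zero =>
    obtain ⟨h0, hk, -⟩ := h
    simp [← hk, h0]
  | succ k ih =>
    obtain ⟨h0, hk, hsteps⟩ := h
    have hstep : RibbonStep e (μ k) nu := hk ▸ hsteps k k.lt_succ_self
    have := ih ⟨h0, rfl, fun t ht => hsteps t (by omega)⟩ fun c hc => hN c (hstep.1 hc)
    have := hstep.ascents_betaResidue_mod_two he hN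
    rw [sum_range_succ, ribbonOf, hk]
    omega

theorem tiling_spin_parity_general (e : ℕ) (he : 2 ≤ e) (la nu : YoungDiagram)
    (μ ν : ℕ → YoungDiagram) (k l : ℕ)
    (hμ : IsRibbonTiling e la nu μ k) (hν : IsRibbonTiling e la nu ν l) :
    (∑ t ∈ Finset.range k, ribbonSpin (ribbonOf μ t)) % 2 =
      (∑ t ∈ Finset.range l, ribbonSpin (ribbonOf ν t)) % 2 := by
  have hN : ∀ c ∈ nu, c.1 < nu.colLen 0 := fun _ => fst_lt_colLen_zero
  have := hμ.ascents_betaResidue_mod_two (by omega) hN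
  have := hν.ascents_betaResidue_mod_two (by omega) hN
  omega

/-- **Well-definedness of the sign `(−1)^spin` of a ribbon tiling.** If the skew shape
`ν/λ` admits two tilings by `e`-ribbons, then the total spins of the two tilings — the
sums of the spins of their ribbons — are congruent modulo 2. -/
theorem tiling_spin_parity (e : ℕ) (he : 2 ≤ e) (la nu : YoungDiagram)
    (hsub : la ≤ nu)
    (μ ν : ℕ → YoungDiagram) (k l : ℕ)
    (hμ : IsRibbonTiling e la nu μ k) (hν : IsRibbonTiling e la nu ν l) :
    (∑ t ∈ Finset.range k, ribbonSpin (ribbonOf μ t)) % 2 =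
      (∑ t ∈ Finset.range l, ribbonSpin (ribbonOf ν t)) % 2 :=
  tiling_spin_parity_general e he la nu μ ν k l hμ hν
end

section
/- Let k ≥ 1 and e ≥ 2. For a permutation σ of Fin k, let σ̂ be the permutation of Fin k × Fin e defined by σ̂(i, j) = (i, j+1) if j < e−1 and σ̂(i, e−1) = (σ(i), 0). Then the cycle type of σ̂ is the multiset obtained by multiplying every entry of the multiset cycleType(σ) + {1,1,…,1} (with k − |support(σ)| copies of 1, one for each fixed point of σ) by e. Consequently, if σ and τ are conjugate permutations of Fin k, then σ̂ and τ̂ are conjugate permutations of Fin k × Fin e. (The conjugacy-class map μ ↦ eμ underlying the Farahat map F with (Fχ)(μ) = χ(eμ), Definition 6.4.) -/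
/-!
The partition of a permutation `π` of a finite type (its cycle type together with a part `1` for
each fixed point) is determined by minimal periods: `n` times the multiplicity of the part `n` is
the number of points of minimal period `n`. The map `σ̂` is a tower of height `e` over `σ`:
`σ̂^[e * m + r]` sends `(i, 0)` to `(σ^[m] i, r)`, so every point `(i, j)` has minimal period `e`
times that of `i`. Hence the partition of `σ̂` is that of `σ` multiplied by `e`; since `e ≥ 2` it
has no part `1`, so it is the cycle type of `σ̂`. Conjugacy classes are determined by partitions.
-/

open Function Finset

namespace Equiv.Perm

variable {α : Type*} [Fintype α] [DecidableEq α]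

theorem minimalPeriod_eq_card_support_cycleOf (π : Perm α) {x : α} (hx : π x ≠ x) :
    minimalPeriod π x = #(π.cycleOf x).support := by
  have hc := π.isCycle_cycleOf hx
  rw [← hc.orderOf]
  refine Nat.dvd_right_iff_eq.mp fun n => ?_
  rw [← isPeriodicPt_iff_minimalPeriod_dvd, orderOf_dvd_iff_pow_eq_one,
    hc.pow_eq_one_iff' (by rwa [cycleOf_apply_self]), cycleOf_pow_apply_self, IsPeriodicPt,
    IsFixedPt, coe_pow]

theorem card_filter_card_support_cycleOf_eq (π : Perm α) {n : ℕ} (hn : n ≠ 0) :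
    #{x | #(π.cycleOf x).support = n} = n * π.cycleType.count n := by
  set T := π.cycleFactorsFinset.filter (#·.support = n)
  have hS : ({x | #(π.cycleOf x).support = n} : Finset α) = T.biUnion support := by
    ext x
    simp only [mem_filter, mem_univ, true_and, mem_biUnion, T]
    constructor
    · intro hx
      have hxs : x ∈ π.support := by
        by_contra h
        rw [(cycleOf_eq_one_iff π).mpr (notMem_support.mp h)] at hx
        simp [eq_comm, hn] at hx
      exact ⟨π.cycleOf x, ⟨cycleOf_mem_cycleFactorsFinset_iff.mpr hxs, hx⟩,
        mem_support_cycleOf_iff.mpr ⟨SameCycle.refl _ _, hxs⟩⟩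
    · rintro ⟨c, ⟨hc, rfl⟩, hxc⟩
      rw [← cycle_is_cycleOf hxc hc]
  have hT : π.cycleType.count n = #T := by
    rw [cycleType_def, Multiset.count_map, Finset.card_def, Finset.filter_val]
    exact congrArg _ (Multiset.filter_congr fun c _ => eq_comm)
  rw [hS, card_biUnion, sum_congr rfl fun c hc => (mem_filter.mp hc).2, sum_const, smul_eq_mul,
    hT, mul_comm]
  exact fun c hc d hd hcd => (cycleFactorsFinset_pairwise_disjoint π (mem_filter.mp hc).1
    (mem_filter.mp hd).1 hcd).disjoint_support

theorem card_filter_minimalPeriod_eq (π : Perm α) {n : ℕ} (hn : n ≠ 0) :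
    #{x | minimalPeriod π x = n} = n * π.partition.parts.count n := by
  rw [parts_partition, Multiset.count_add, Multiset.count_replicate, mul_add]
  obtain rfl | hn2 := (Nat.one_le_iff_ne_zero.mpr hn).eq_or_lt
  · have hfix : ({x | minimalPeriod π x = 1} : Finset α) = π.supportᶜ := by
      ext x
      simp [minimalPeriod_eq_one_iff_isFixedPt, IsFixedPt]
    rw [hfix, card_compl,
      Multiset.count_eq_zero_of_notMem fun h => (one_lt_of_mem_cycleType h).ne rfl]
    simp
  · rw [if_neg hn2.ne, mul_zero, add_zero, ← card_filter_card_support_cycleOf_eq π hn]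
    congr 1
    ext x
    simp only [mem_filter, mem_univ, true_and]
    by_cases hx : π x = x
    · rw [(minimalPeriod_eq_one_iff_isFixedPt).mpr hx, (cycleOf_eq_one_iff π).mpr hx]
      simp only [support_one, card_empty]
      omega
    · rw [minimalPeriod_eq_card_support_cycleOf π hx]

theorem partition_parts_eq_map_mul {e : ℕ} (he : 0 < e) (σ : Perm α) (ρ : Perm (α × Fin e))
    (h : ∀ x, minimalPeriod ρ x = e * minimalPeriod σ x.1) :
    ρ.partition.parts = σ.partition.parts.map (e * ·) := by
  ext n
  obtain rfl | hn := eq_or_ne n 0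
  · rw [Multiset.count_eq_zero_of_notMem fun h0 => (ρ.partition.parts_pos h0).ne rfl,
      Multiset.count_eq_zero_of_notMem]
    intro h0
    obtain ⟨m, hm, hm0⟩ := Multiset.mem_map.mp h0
    exact (σ.partition.parts_pos hm).ne' ((Nat.mul_eq_zero.mp hm0).resolve_left he.ne')
  refine Nat.eq_of_mul_eq_mul_left (Nat.pos_of_ne_zero hn) ?_
  have hfib : #{x : α × Fin e | e * minimalPeriod σ x.1 = n} =
      e * #{i | e * minimalPeriod σ i = n} := by
    rw [← univ_product_univ, filter_product_left (e * minimalPeriod σ · = n), card_product,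
      card_univ, Fintype.card_fin, mul_comm]
  rw [← card_filter_minimalPeriod_eq _ hn]
  simp_rw [h, hfib]
  by_cases hdvd : e ∣ n
  · obtain ⟨m, rfl⟩ := hdvd
    have hm : m ≠ 0 := right_ne_zero_of_mul hn
    simp only [mul_right_inj' he.ne']
    rw [card_filter_minimalPeriod_eq σ hm,
      Multiset.count_map_eq_count' _ _ (mul_right_injective₀ he.ne'), mul_assoc]
  · rw [filter_false_of_mem fun i _ hi => hdvd ⟨_, hi.symm⟩, card_empty,
      Multiset.count_eq_zero_of_notMem, mul_zero, mul_zero]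
    intro hmem
    obtain ⟨m, -, hm⟩ := Multiset.mem_map.mp hmem
    exact hdvd ⟨m, hm.symm⟩

end Equiv.Perm

/-- `f` is the map `σ̂` of the statement. -/
def IsTower {α : Type*} (e : ℕ) (he : 0 < e) (σ : α → α) (f : α × Fin e → α × Fin e) : Prop :=
  ∀ i j, f (i, j) = if h : (j : ℕ) + 1 < e then (i, ⟨j + 1, h⟩) else (σ i, ⟨0, he⟩)

namespace IsTower

variable {α : Type*} {e : ℕ} {he : 0 < e} {f : α × Fin e → α × Fin e}

theorem iterate_mk_zero_of_lt {σ : α → α} (hf : IsTower e he σ f) (i : α) {r : ℕ} (hr : r < e) :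
    f^[r] (i, ⟨0, he⟩) = (i, ⟨r, hr⟩) := by
  induction r with
  | zero => rfl
  | succ r ih => rw [iterate_succ_apply', ih (by omega), hf, dif_pos hr]

theorem semiconj_iterate {σ : α → α} (hf : IsTower e he σ f) :
    Semiconj (·, ⟨0, he⟩) σ f^[e] := by
  intro i
  obtain ⟨r, rfl⟩ : ∃ r, e = r + 1 := ⟨e - 1, by omega⟩
  rw [iterate_succ_apply', hf.iterate_mk_zero_of_lt i r.lt_succ_self, hf, dif_neg (by simp)]

theorem iterate_mul_add {σ : α → α} (hf : IsTower e he σ f) (i : α) (m : ℕ) {r : ℕ}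
    (hr : r < e) : f^[e * m + r] (i, ⟨0, he⟩) = (σ^[m] i, ⟨r, hr⟩) := by
  rw [add_comm, iterate_add_apply, iterate_mul, ← hf.semiconj_iterate.iterate_right m i,
    hf.iterate_mk_zero_of_lt _ hr]

theorem isPeriodicPt_mk_zero_iff {σ : α → α} (hf : IsTower e he σ f) (i : α) (p : ℕ) :
    IsPeriodicPt f p (i, ⟨0, he⟩) ↔ e * minimalPeriod σ i ∣ p := by
  conv_lhs => rw [IsPeriodicPt, IsFixedPt, ← Nat.div_add_mod p e,
    hf.iterate_mul_add i _ (Nat.mod_lt p he)]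
  simp only [Prod.mk.injEq, Fin.mk.injEq]
  constructor
  · rintro ⟨hper, hmod⟩
    exact (Nat.dvd_div_iff_mul_dvd (Nat.dvd_of_mod_eq_zero hmod)).mp
      (IsPeriodicPt.minimalPeriod_dvd hper)
  · intro h
    have hep : e ∣ p := (Dvd.intro _ rfl).trans h
    exact ⟨isPeriodicPt_iff_minimalPeriod_dvd.mpr ((Nat.dvd_div_iff_mul_dvd hep).mpr h),
      Nat.mod_eq_zero_of_dvd hep⟩

theorem minimalPeriod_mk_zero {σ : α → α} (hf : IsTower e he σ f) (i : α) :
    minimalPeriod f (i, ⟨0, he⟩) = e * minimalPeriod σ i :=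
  Nat.dvd_right_iff_eq.mp fun p => by
    rw [← isPeriodicPt_iff_minimalPeriod_dvd, hf.isPeriodicPt_mk_zero_iff]

theorem minimalPeriod_eq [Finite α] {σ : Equiv.Perm α} (hf : IsTower e he σ f) (x : α × Fin e) :
    minimalPeriod f x = e * minimalPeriod σ x.1 := by
  obtain ⟨i, j⟩ := x
  dsimp only
  have hper : (i, ⟨0, he⟩) ∈ periodicPts f := by
    rw [← minimalPeriod_pos_iff_mem_periodicPts, hf.minimalPeriod_mk_zero]
    exact mul_pos he (minimalPeriod_pos_of_mem_periodicPts (σ.injective.mem_periodicPts i))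
  have hclimb := hf.iterate_mk_zero_of_lt i j.isLt
  rw [Fin.eta] at hclimb
  rw [← hclimb, minimalPeriod_apply_iterate hper, hf.minimalPeriod_mk_zero]

end IsTower

open Equiv.Perm

/-- **The conjugacy-class map `μ ↦ eμ` underlying the Farahat map.** For a permutation
`σ` of `Fin k`, let `σ̂` be the permutation of `Fin k × Fin e` with
`σ̂(i, j) = (i, j+1)` if `j < e−1` and `σ̂(i, e−1) = (σ i, 0)`.  Then the cycle type of
`σ̂` is obtained by multiplying every entry of `cycleType σ + {1, …, 1}` (with
`k − |support σ|` copies of `1`, one for each fixed point of `σ`) by `e`.  Consequently,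
if `σ` and `τ` are conjugate, so are `σ̂` and `τ̂`. -/
theorem farahat_cycleType (k e : ℕ) (he : 2 ≤ e)
    (σ τ : Equiv.Perm (Fin k)) (σh τh : Equiv.Perm (Fin k × Fin e))
    (hσh : ∀ (i : Fin k) (j : Fin e), σh (i, j) =
      if h : (j : ℕ) + 1 < e then (i, ⟨(j : ℕ) + 1, h⟩) else (σ i, ⟨0, by omega⟩))
    (hτh : ∀ (i : Fin k) (j : Fin e), τh (i, j) =
      if h : (j : ℕ) + 1 < e then (i, ⟨(j : ℕ) + 1, h⟩) else (τ i, ⟨0, by omega⟩)) :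
    σh.cycleType =
      (σ.cycleType + Multiset.replicate (k - σ.support.card) 1).map (fun m => e * m) ∧
    (IsConj σ τ → IsConj σh τh) := by
  have hpos : 0 < e := by omega
  have hσ : σh.partition.parts = σ.partition.parts.map (e * ·) :=
    partition_parts_eq_map_mul hpos σ σh (IsTower.minimalPeriod_eq (he := hpos) hσh)
  have hτ : τh.partition.parts = τ.partition.parts.map (e * ·) :=
    partition_parts_eq_map_mul hpos τ τh (IsTower.minimalPeriod_eq (he := hpos) hτh)
  refine ⟨?_, fun hστ => ?_⟩
  · rw [← filter_parts_partition_eq_cycleType, hσ, Multiset.filter_eq_self.mpr, parts_partition,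
      Fintype.card_fin]
    intro n hn
    obtain ⟨m, hm, rfl⟩ := Multiset.mem_map.mp hn
    exact le_mul_of_le_of_one_le he (σ.partition.parts_pos hm)
  · rw [partition_eq_of_isConj] at hστ ⊢
    exact Nat.Partition.ext (by rw [hσ, hτ, hστ])
end
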